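/- arXiv:2010.03414 — 2 statements merged into one kernel-verified Lean document; each statement's English description precedes it below -/
import Mathlib

section
/- Let (W,S) be a right-angled Coxeter system. If s₁⋯sₙ is an expression with letters in S and s₁⋯sₙ = s₁⋯ŝᵢ⋯ŝⱼ⋯sₙ for some i < j (deletion of the i-th and j-th letters), and s_{i+1}⋯s_{j-1} is reduced, then sᵢ = sⱼ and sᵢ commutes with every letter appearing in the subword s_{i+1}⋯s_{j-1}. -/
open List CoxeterSystem

namespace RAC

variable {B : Type*} {W : Type*} [Group W] {M : CoxeterMatrix B} (cs : CoxeterSystem M W)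

open scoped Classical

/-- The Bjorner–Brenti sign action of a generator on `W × ℤˣ`. -/
noncomputable def signF (i : B) : Function.End (W × ℤˣ) :=
  fun p => (cs.simple i * p.1 * cs.simple i, if p.1 = cs.simple i then -p.2 else p.2)

lemma end_mul_apply (f g : Function.End (W × ℤˣ)) (p : W × ℤˣ) : (f * g) p = f (g p) := rfl

lemma conj_eq_iff {G : Type*} [Group G] (a u t : G) : a * u * a⁻¹ = t ↔ u = a⁻¹ * t * a := by
  constructor
  · intro h; rw [← h]; group
  · intro h; rw [h]; group

lemma sconj_eq_iff {G : Type*} [Group G] {t : G} (ht : t * t = 1) (u r : G) :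
    t * u * t = r ↔ u = t * r * t := by
  constructor
  · intro h
    rw [← h]
    have e : t * (t * u * t) * t = (t * t) * u * (t * t) := by group
    rw [e, ht, one_mul, mul_one]
  · intro h
    rw [h]
    have e : t * (t * r * t) * t = (t * t) * r * (t * t) := by group
    rw [e, ht, one_mul, mul_one]

lemma key_conj {G : Type*} [Group G] {t g : G} (ht : t⁻¹ = t) (hc : t * g * t⁻¹ = g⁻¹)
    (k : ℕ) : (g ^ k)⁻¹ * t * g ^ k = t * g ^ (2 * k) := by
  have h1 : t * g ^ k * t⁻¹ = (g ^ k)⁻¹ := by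
    rw [← conj_pow, hc, inv_pow]
  calc (g ^ k)⁻¹ * t * g ^ k = (t * g ^ k * t⁻¹) * t * g ^ k := by rw [h1]
    _ = t * g ^ k * g ^ k := by group
    _ = t * g ^ (2 * k) := by rw [mul_assoc, ← pow_add, two_mul]

lemma key_conj' {G : Type*} [Group G] {t g : G} (ht : t⁻¹ = t) (hc : t * g * t⁻¹ = g⁻¹)
    (k : ℕ) : (g ^ k)⁻¹ * (t * g) * g ^ k = t * g ^ (2 * k + 1) := by
  calc (g ^ k)⁻¹ * (t * g) * g ^ k = ((g ^ k)⁻¹ * t * g ^ k) * g := by group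
    _ = t * (g ^ (2 * k) * g) := by rw [key_conj ht hc k, mul_assoc]
    _ = t * g ^ (2 * k + 1) := by rw [← pow_succ]

lemma simple_conj_hyps (i j : B) :
    (cs.simple j)⁻¹ = cs.simple j ∧
    cs.simple j * (cs.simple i * cs.simple j) * (cs.simple j)⁻¹ = (cs.simple i * cs.simple j)⁻¹ := by
  constructor
  · exact cs.inv_simple j
  · rw [cs.inv_simple, mul_inv_rev, cs.inv_simple, cs.inv_simple]
    calc cs.simple j * (cs.simple i * cs.simple j) * cs.simple j
        = cs.simple j * (cs.simple i * (cs.simple j * cs.simple j)) := by group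
      _ = cs.simple j * cs.simple i := by rw [cs.simple_mul_simple_self, mul_one]

lemma conj_key (i j : B) (k : ℕ) :
    ((cs.simple i * cs.simple j) ^ k)⁻¹ * cs.simple j * (cs.simple i * cs.simple j) ^ k
      = cs.simple j * (cs.simple i * cs.simple j) ^ (2 * k) := by
  obtain ⟨h1, h2⟩ := simple_conj_hyps cs i j
  exact key_conj h1 h2 k

lemma conj_key' (i j : B) (k : ℕ) :
    ((cs.simple i * cs.simple j) ^ k)⁻¹ * (cs.simple j * (cs.simple i * cs.simple j)) *
        (cs.simple i * cs.simple j) ^ k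
      = cs.simple j * (cs.simple i * cs.simple j) ^ (2 * k + 1) := by
  obtain ⟨h1, h2⟩ := simple_conj_hyps cs i j
  exact key_conj' h1 h2 k

lemma signF_prod_pow (i j : B) (k : ℕ) (u : W) (ε : ℤˣ) :
    ((signF cs i * signF cs j) ^ k) (u, ε) =
      ((cs.simple i * cs.simple j) ^ k * u * ((cs.simple i * cs.simple j) ^ k)⁻¹,
        ε * ∏ l ∈ Finset.range (2 * k),
          (if u = cs.simple j * (cs.simple i * cs.simple j) ^ l then (-1 : ℤˣ) else 1)) := by
  induction k with
  | zero =>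
    simp only [pow_zero, Nat.mul_zero, Finset.range_zero, Finset.prod_empty, mul_one, one_mul,
      inv_one]
    rfl
  | succ k ih =>
    rw [pow_succ' (signF cs i * signF cs j) k, end_mul_apply, ih, end_mul_apply]
    have h2 : 2 * (k + 1) = (2 * k) + 1 + 1 := by ring
    rw [h2, Finset.prod_range_succ, Finset.prod_range_succ]
    have hc1 : ((cs.simple i * cs.simple j) ^ k * u * ((cs.simple i * cs.simple j) ^ k)⁻¹
        = cs.simple j) ↔ u = cs.simple j * (cs.simple i * cs.simple j) ^ (2 * k) := by
      rw [conj_eq_iff, conj_key cs i j k]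
    have hc2 : (cs.simple j * ((cs.simple i * cs.simple j) ^ k * u *
          ((cs.simple i * cs.simple j) ^ k)⁻¹) * cs.simple j = cs.simple i)
        ↔ u = cs.simple j * (cs.simple i * cs.simple j) ^ (2 * k + 1) := by
      rw [sconj_eq_iff (cs.simple_mul_simple_self j), conj_eq_iff,
        mul_assoc (cs.simple j) (cs.simple i) (cs.simple j), conj_key' cs i j k]
    simp only [signF]
    rw [Prod.ext_iff]
    constructor
    · dsimp only
      rw [pow_succ' (cs.simple i * cs.simple j) k]
      simp only [mul_inv_rev, cs.inv_simple]
      group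
    · dsimp only
      by_cases h1 : (cs.simple i * cs.simple j) ^ k * u * ((cs.simple i * cs.simple j) ^ k)⁻¹
          = cs.simple j
      · rw [if_pos h1, if_pos (hc1.mp h1)]
        by_cases h2' : cs.simple j * ((cs.simple i * cs.simple j) ^ k * u *
            ((cs.simple i * cs.simple j) ^ k)⁻¹) * cs.simple j = cs.simple i
        · rw [if_pos h2', if_pos (hc2.mp h2')]
          simp [mul_neg, neg_neg]
        · rw [if_neg h2', if_neg (fun hh => h2' (hc2.mpr hh))]
          simp [mul_neg]
      · rw [if_neg h1, if_neg (fun hh => h1 (hc1.mpr hh))]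
        by_cases h2' : cs.simple j * ((cs.simple i * cs.simple j) ^ k * u *
            ((cs.simple i * cs.simple j) ^ k)⁻¹) * cs.simple j = cs.simple i
        · rw [if_pos h2', if_pos (hc2.mp h2')]
          simp [mul_neg]
        · rw [if_neg h2', if_neg (fun hh => h2' (hc2.mpr hh))]
          simp

lemma signF_liftable : M.IsLiftable (signF cs) := by
  intro i j
  funext p
  obtain ⟨u, ε⟩ := p
  rw [signF_prod_pow cs i j (M.M i j) u ε]
  have hm : (cs.simple i * cs.simple j) ^ M.M i j = 1 := cs.simple_mul_simple_pow i j
  rw [hm]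
  have hsplit : (2 : ℕ) * M.M i j = M.M i j + M.M i j := by ring
  rw [hsplit, Finset.prod_range_add]
  have heq : ∀ l : ℕ,
      (if u = cs.simple j * (cs.simple i * cs.simple j) ^ (M.M i j + l) then (-1 : ℤˣ) else 1)
      = (if u = cs.simple j * (cs.simple i * cs.simple j) ^ l then (-1 : ℤˣ) else 1) := by
    intro l
    rw [pow_add, hm, one_mul]
  simp only [heq]
  rw [Int.units_mul_self, mul_one]
  simp only [one_mul, inv_one, mul_one]
  rfl

/-- The sign homomorphism. -/
noncomputable def signHom : W →* Function.End (W × ℤˣ) :=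
  cs.lift ⟨signF cs, signF_liftable cs⟩

lemma signHom_wordProd (ω : List B) (u : W) (ε : ℤˣ) :
    (signHom cs) (cs.wordProd ω) (u, ε) =
      (cs.wordProd ω * u * (cs.wordProd ω)⁻¹,
        ε * ((cs.rightInvSeq ω).map (fun t => if u = t then (-1 : ℤˣ) else 1)).prod) := by
  induction ω with
  | nil =>
    rw [cs.wordProd_nil, map_one]
    simp only [rightInvSeq_nil, map_nil, prod_nil, mul_one, one_mul, inv_one]
    rfl
  | cons i ω ih =>
    rw [cs.wordProd_cons, map_mul, end_mul_apply, ih]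
    have hs : (signHom cs) (cs.simple i) = signF cs i := cs.lift_apply_simple (signF_liftable cs) i
    rw [hs]
    have hris : cs.rightInvSeq (i :: ω)
        = ((cs.wordProd ω)⁻¹ * cs.simple i * cs.wordProd ω) :: cs.rightInvSeq ω := rfl
    rw [hris]
    simp only [map_cons, prod_cons, signF]
    rw [Prod.ext_iff]
    constructor
    · dsimp only
      simp only [mul_inv_rev, cs.inv_simple]
      group
    · dsimp only
      have hcond : (cs.wordProd ω * u * (cs.wordProd ω)⁻¹ = cs.simple i)
          ↔ u = (cs.wordProd ω)⁻¹ * cs.simple i * cs.wordProd ω := conj_eq_iff _ _ _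
      by_cases h1 : cs.wordProd ω * u * (cs.wordProd ω)⁻¹ = cs.simple i
      · rw [if_pos h1, if_pos (hcond.mp h1)]
        simp [mul_neg, neg_mul]
      · rw [if_neg h1, if_neg (fun hh => h1 (hcond.mpr hh))]
        simp [mul_comm]

lemma sign_invariance {ω₁ ω₂ : List B} (h : cs.wordProd ω₁ = cs.wordProd ω₂) (u : W) :
    ((cs.rightInvSeq ω₁).map (fun t => if u = t then (-1 : ℤˣ) else 1)).prod =
    ((cs.rightInvSeq ω₂).map (fun t => if u = t then (-1 : ℤˣ) else 1)).prod := by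
  have h1 := signHom_wordProd cs ω₁ u 1
  have h2 := signHom_wordProd cs ω₂ u 1
  rw [h] at h1
  rw [h1] at h2
  have := congrArg Prod.snd h2
  simpa using this

/-- The (left) exchange property. -/
lemma exchange {ω : List B} {a : B}
    (h : cs.length (cs.simple a * cs.wordProd ω) < cs.length (cs.wordProd ω)) :
    ∃ j < ω.length, cs.simple a * cs.wordProd ω = cs.wordProd (ω.eraseIdx j) := by
  obtain ⟨μ, hμl, hμ⟩ := cs.exists_reduced_word (cs.simple a * cs.wordProd ω)
  set u₀ := (cs.wordProd μ)⁻¹ * cs.simple a * cs.wordProd μ with hu₀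
  have hπ : cs.wordProd (a :: μ) = cs.wordProd ω := by
    rw [cs.wordProd_cons, ← hμ, cs.simple_mul_simple_cancel_left]
  have hredμ : cs.IsReduced μ := hμl
  have hlμ : cs.length (cs.wordProd μ) = cs.length (cs.simple a * cs.wordProd ω) := by rw [← hμ]
  have hnot : u₀ ∉ cs.rightInvSeq μ := by
    intro hmem
    have hinv := cs.isRightInversion_of_mem_rightInvSeq hredμ hmem
    have e2 : cs.wordProd μ * u₀ = cs.simple a * cs.wordProd μ := by rw [hu₀]; group
    have e3 : cs.simple a * cs.wordProd μ = cs.wordProd ω := by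
      rw [← hμ, cs.simple_mul_simple_cancel_left]
    have := hinv.2
    rw [e2, e3, hlμ] at this
    omega
  have hris : cs.rightInvSeq (a :: μ) = u₀ :: cs.rightInvSeq μ := rfl
  have hone : ∀ x ∈ (cs.rightInvSeq μ).map (fun t => if u₀ = t then (-1 : ℤˣ) else 1), x = 1 := by
    intro x hx
    obtain ⟨t, ht, rfl⟩ := List.mem_map.mp hx
    rw [if_neg]
    intro heq
    exact hnot (heq ▸ ht)
  have hsgn1 : ((cs.rightInvSeq (a :: μ)).map (fun t => if u₀ = t then (-1 : ℤˣ) else 1)).prod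
      = -1 := by
    rw [hris, map_cons, prod_cons, if_pos rfl, List.prod_eq_one hone, mul_one]
  have hsgn2 := sign_invariance cs hπ u₀
  rw [hsgn1] at hsgn2
  have hmem : u₀ ∈ cs.rightInvSeq ω := by
    by_contra hn
    have : ∀ x ∈ (cs.rightInvSeq ω).map (fun t => if u₀ = t then (-1 : ℤˣ) else 1), x = 1 := by
      intro x hx
      obtain ⟨t, ht, rfl⟩ := List.mem_map.mp hx
      rw [if_neg]
      intro heq
      exact hn (heq ▸ ht)
    rw [List.prod_eq_one this] at hsgn2
    exact absurd hsgn2 (by decide)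
  obtain ⟨j, hj, hget⟩ := List.mem_iff_getElem.mp hmem
  refine ⟨j, by simpa using hj, ?_⟩
  have hwp := cs.wordProd_mul_getD_rightInvSeq ω j
  rw [List.getD_eq_getElem _ _ hj, hget] at hwp
  have e : cs.wordProd ω * u₀ = cs.simple a * cs.wordProd ω := by
    rw [hu₀, ← hμ]
    group
  rw [← e, hwp]


lemma zmod2_mul_self (z : Multiplicative (ZMod 2)) : z * z = 1 := by
  revert z; decide

noncomputable def chiF (d : B) : B → Multiplicative (ZMod 2) :=
  fun i => Multiplicative.ofAdd (if i = d then 1 else 0)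

lemma chi_liftable (hra : ∀ i j : B, i ≠ j → M.M i j = 2 ∨ M.M i j = 0) (d : B) :
    M.IsLiftable (chiF d) := by
  intro i j
  rcases eq_or_ne i j with rfl | hij
  · rw [M.diagonal, pow_one, zmod2_mul_self]
  · rcases hra i j hij with h2 | h0
    · rw [h2, pow_two, zmod2_mul_self]
    · rw [h0, pow_zero]

noncomputable def chiHom (hra : ∀ i j : B, i ≠ j → M.M i j = 2 ∨ M.M i j = 0) (d : B) :
    W →* Multiplicative (ZMod 2) :=
  cs.lift ⟨chiF d, chi_liftable hra d⟩

lemma chiHom_simple (hra : ∀ i j : B, i ≠ j → M.M i j = 2 ∨ M.M i j = 0) (d i : B) :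
    chiHom cs hra d (cs.simple i) = Multiplicative.ofAdd (if i = d then 1 else 0) :=
  cs.lift_apply_simple (chi_liftable hra d) i

lemma simple_ne (hra : ∀ i j : B, i ≠ j → M.M i j = 2 ∨ M.M i j = 0) {a c : B} (h : a ≠ c) :
    cs.simple a ≠ cs.simple c := by
  intro he
  have h2 := congrArg (chiHom cs hra a) he
  rw [chiHom_simple, chiHom_simple, if_pos rfl, if_neg (fun hh => h hh.symm)] at h2
  exact absurd h2 (by decide)

/-! ### The infinite dihedral action -/

noncomputable def dihF (a c : B) : B → Function.End ℤ :=
  fun i => if i = a then (fun x => -x) else if i = c then (fun x => 1 - x) else id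

lemma dihF_sq (a c i : B) : dihF a c i * dihF a c i = 1 := by
  funext x
  show dihF a c i (dihF a c i x) = x
  by_cases hia : i = a
  · simp [dihF, hia]
  · by_cases hic : i = c
    · subst hic; simp [dihF, hia]
    · simp [dihF, hia, hic]

lemma dih_liftable (hra : ∀ i j : B, i ≠ j → M.M i j = 2 ∨ M.M i j = 0) {a c : B}
    (hac : a ≠ c) (h0 : M.M a c = 0) : M.IsLiftable (dihF a c) := by
  intro i j
  rcases eq_or_ne i j with rfl | hij
  · rw [M.diagonal, pow_one, dihF_sq]
  · rcases hra i j hij with h2 | h0'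
    · have hone : dihF a c i = 1 ∨ dihF a c j = 1 := by
        by_cases hia : i = a
        · right
          have hjc : j ≠ c := by
            intro hjc'
            rw [hia, hjc', h0] at h2
            exact absurd h2 (by decide)
          have hja : j ≠ a := fun hh => hij (hia.trans hh.symm)
          unfold dihF; exact (if_neg hja).trans (if_neg hjc)
        · by_cases hic : i = c
          · right
            have hja : j ≠ a := by
              intro hja'
              rw [hic, hja', M.symmetric c a, h0] at h2
              exact absurd h2 (by decide)
            have hjc : j ≠ c := fun hh => hij (hic.trans hh.symm)
            unfold dihF; exact (if_neg hja).trans (if_neg hjc)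
          · left; unfold dihF; exact (if_neg hia).trans (if_neg hic)
      rcases hone with h1 | h1
      · rw [h2, h1, one_mul, pow_two, dihF_sq]
      · rw [h2, h1, mul_one, pow_two, dihF_sq]
    · rw [h0', pow_zero]

lemma end_mul_applyZ (f g : Function.End ℤ) (x : ℤ) : (f * g) x = f (g x) := rfl

/-! ### Alternating words -/

def altL (x y : B) : ℕ → List B
  | 0 => []
  | k+1 => x :: altL y x k

lemma altL_length (x y : B) (k : ℕ) : (altL x y k).length = k := by
  induction k generalizing x y with
  | zero => rfl
  | succ k ih => show (x :: altL y x k).length = k + 1; simp [ih]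

lemma altL_eraseIdx_last (x y : B) (k : ℕ) : (altL x y (k+1)).eraseIdx k = altL x y k := by
  induction k generalizing x y with
  | zero => rfl
  | succ k ih =>
    show x :: (altL y x (k+1)).eraseIdx k = x :: altL y x k
    rw [ih]

lemma altL_erase_dup : ∀ (j k : ℕ) (x y : B), j + 2 ≤ k →
    ∃ A C z, y :: (altL x y k).eraseIdx j = A ++ z :: z :: C := by
  intro j
  induction j with
  | zero =>
    intro k x y hk
    obtain ⟨k', rfl⟩ : ∃ k', k = k' + 2 := ⟨k - 2, by omega⟩
    exact ⟨[], altL x y k', y, rfl⟩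
  | succ j ih =>
    intro k x y hk
    obtain ⟨k', rfl⟩ : ∃ k', k = k' + 1 := ⟨k - 1, by omega⟩
    obtain ⟨A, C, z, hACz⟩ := ih k' y x (by omega)
    refine ⟨y :: A, C, z, ?_⟩
    show y :: x :: (altL y x k').eraseIdx j = y :: A ++ z :: z :: C
    rw [show x :: (altL y x k').eraseIdx j = A ++ z :: z :: C from hACz]
    rfl

lemma dih_diff (a c : B) (θ : W →* Function.End ℤ)
    (hθa : θ (cs.simple a) = (fun x => -x)) (hθc : θ (cs.simple c) = (fun x => (1:ℤ) - x)) :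
    ∀ k : ℕ, θ (cs.wordProd (altL c a k)) 0 - θ (cs.wordProd (altL a c k)) 0 = k := by
  intro k
  induction k with
  | zero =>
    show θ (cs.wordProd []) 0 - θ (cs.wordProd []) 0 = ((0:ℕ) : ℤ)
    rw [cs.wordProd_nil, map_one]
    norm_num
  | succ k ih =>
    have e1 : cs.wordProd (altL a c (k+1)) = cs.simple a * cs.wordProd (altL c a k) :=
      cs.wordProd_cons a _
    have e2 : cs.wordProd (altL c a (k+1)) = cs.simple c * cs.wordProd (altL a c k) :=
      cs.wordProd_cons c _
    rw [e1, e2, map_mul, map_mul, hθa, hθc]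
    show (1:ℤ) - θ (cs.wordProd (altL a c k)) 0 - -(θ (cs.wordProd (altL c a k)) 0) = ((k+1 : ℕ) : ℤ)
    push_cast
    push_cast at ih
    linarith

lemma alt_ne (hra : ∀ i j : B, i ≠ j → M.M i j = 2 ∨ M.M i j = 0) {a c : B}
    (hac : a ≠ c) (h0 : M.M a c = 0) (k : ℕ) (hk : 1 ≤ k) :
    cs.wordProd (altL a c k) ≠ cs.wordProd (altL c a k) := by
  intro he
  set θ : W →* Function.End ℤ := cs.lift ⟨dihF a c, dih_liftable hra hac h0⟩ with hθ
  have hθa : θ (cs.simple a) = (fun x => -x) := by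
    rw [hθ, cs.lift_apply_simple]
    unfold dihF; exact if_pos rfl
  have hθc : θ (cs.simple c) = (fun x => (1:ℤ) - x) := by
    rw [hθ, cs.lift_apply_simple]
    unfold dihF; exact (if_neg (show c ≠ a from fun hh => hac hh.symm)).trans (if_pos rfl)
  have hd := dih_diff cs a c θ hθa hθc k
  rw [he] at hd
  simp at hd
  omega

lemma not_isReduced_dup (A C : List B) (z : B) : ¬ cs.IsReduced (A ++ z :: z :: C) := by
  intro hred
  have he : cs.wordProd (A ++ z :: z :: C) = cs.wordProd (A ++ C) := by
    rw [cs.wordProd_append, cs.wordProd_append, cs.wordProd_cons, cs.wordProd_cons,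
      cs.simple_mul_simple_cancel_left]
  have hl := cs.length_wordProd_le (A ++ C)
  rw [← he, hred] at hl
  simp only [List.length_append, List.length_cons] at hl
  omega

lemma alt_step (hra : ∀ i j : B, i ≠ j → M.M i j = 2 ∨ M.M i j = 0) {a c : B}
    (hac : a ≠ c) (h0 : M.M a c = 0) {u : W}
    (ha : cs.IsLeftDescent u a) (hc : cs.IsLeftDescent u c) :
    ∀ (n : ℕ) (m : List B), m.length = n → ∀ (k : ℕ), 1 ≤ k → ∀ x y : B,
      ((x = a ∧ y = c) ∨ (x = c ∧ y = a)) →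
      (altL x y k ++ m).length = cs.length u →
      u = cs.wordProd (altL x y k ++ m) → False := by
  intro n
  induction n using Nat.strong_induction_on with
  | _ n IH =>
  intro m hm k hk x y hxy hlen hu
  have hy : cs.IsLeftDescent u y := by
    rcases hxy with ⟨_, rfl⟩ | ⟨_, rfl⟩
    · exact hc
    · exact ha
  have hy' : cs.length (cs.simple y * cs.wordProd (altL x y k ++ m))
      < cs.length (cs.wordProd (altL x y k ++ m)) := by rw [← hu]; exact hy
  obtain ⟨j, hj, hje⟩ := exchange cs hy'
  have hwlen : (altL x y k ++ m).length = k + m.length := by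
    simp [altL_length]
  have hu' : u = cs.wordProd (y :: (altL x y k ++ m).eraseIdx j) := by
    rw [cs.wordProd_cons, ← hje, ← hu, cs.simple_mul_simple_cancel_left]
  have hlen' : (y :: (altL x y k ++ m).eraseIdx j).length = cs.length u := by
    have h1 := List.length_eraseIdx_add_one hj
    simp only [List.length_cons]
    omega
  have hred' : cs.IsReduced (y :: (altL x y k ++ m).eraseIdx j) := by
    show cs.length (cs.wordProd _) = _
    rw [← hu']
    exact hlen'.symm
  by_cases hjk : j < k
  · by_cases hj2 : j + 2 ≤ k
    · obtain ⟨A, C, z, hACz⟩ := altL_erase_dup j k x y hj2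
      have hw : y :: (altL x y k ++ m).eraseIdx j = A ++ z :: z :: (C ++ m) := by
        rw [List.eraseIdx_append_of_lt_length (by rw [altL_length]; exact hjk) m,
          ← List.cons_append, hACz]
        simp [List.append_assoc]
      rw [hw] at hred'
      exact not_isReduced_dup cs A (C ++ m) z hred'
    · obtain ⟨k', rfl⟩ : ∃ k', k = k' + 1 := ⟨k - 1, by omega⟩
      have hjeq : j = k' := by omega
      have hw : y :: (altL x y (k'+1) ++ m).eraseIdx j = altL y x (k'+1) ++ m := by
        rw [hjeq, List.eraseIdx_append_of_lt_length (by rw [altL_length]; omega) m,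
          altL_eraseIdx_last, ← List.cons_append]
        rfl
      have heq2 : cs.wordProd (altL x y (k'+1)) = cs.wordProd (altL y x (k'+1)) := by
        have e1 : cs.wordProd (altL x y (k'+1) ++ m) = cs.wordProd (altL y x (k'+1) ++ m) := by
          rw [← hu, hu', hw]
        rw [cs.wordProd_append, cs.wordProd_append] at e1
        exact mul_right_cancel e1
      rcases hxy with ⟨rfl, rfl⟩ | ⟨rfl, rfl⟩
      · exact alt_ne cs hra hac h0 (k'+1) (by omega) heq2
      · exact alt_ne cs hra hac h0 (k'+1) (by omega) heq2.symm
  · have hjm : j - k < m.length := by omega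
    have hw : y :: (altL x y k ++ m).eraseIdx j = altL y x (k+1) ++ m.eraseIdx (j - k) := by
      rw [List.eraseIdx_append_of_length_le (by rw [altL_length]; omega) m, altL_length,
        ← List.cons_append]
      rfl
    have hm' : (m.eraseIdx (j - k)).length + 1 = m.length := List.length_eraseIdx_add_one hjm
    refine IH (m.length - 1) (by omega) (m.eraseIdx (j - k)) (by omega) (k+1) (by omega) y x
      (by tauto) ?_ ?_
    · rw [← hw]; exact hlen'
    · rw [hw] at hu'; exact hu'

lemma no_two_noncomm_descents (hra : ∀ i j : B, i ≠ j → M.M i j = 2 ∨ M.M i j = 0) {a c : B}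
    (hac : a ≠ c) (h0 : M.M a c = 0) {u : W}
    (ha : cs.IsLeftDescent u a) (hc : cs.IsLeftDescent u c) : False := by
  obtain ⟨ω, hωl, hωe⟩ := cs.exists_reduced_word u
  have ha' : cs.length (cs.simple a * cs.wordProd ω) < cs.length (cs.wordProd ω) := by
    rw [← hωe]; exact ha
  obtain ⟨j, hj, hje⟩ := exchange cs ha'
  have hu1 : u = cs.wordProd (altL a c 1 ++ ω.eraseIdx j) := by
    show u = cs.wordProd (a :: ω.eraseIdx j)
    rw [cs.wordProd_cons, ← hje, ← hωe, cs.simple_mul_simple_cancel_left]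
  have hlen1 : (altL a c 1 ++ ω.eraseIdx j).length = cs.length u := by
    have h1 := List.length_eraseIdx_add_one hj
    have hωl' : cs.length u = ω.length := by rw [hωe]; exact hωl
    simp only [List.length_append, altL_length]
    omega
  exact alt_step cs hra hac h0 ha hc (ω.eraseIdx j).length _ rfl 1 le_rfl a c
    (Or.inl ⟨rfl, rfl⟩) hlen1 hu1

lemma commute_of_comm (hra : ∀ i j : B, i ≠ j → M.M i j = 2 ∨ M.M i j = 0) :
    ∀ (n : ℕ) (l : List B), l.length = n → cs.IsReduced l →
    ∀ a : B, cs.simple a * cs.wordProd l = cs.wordProd l * cs.simple a →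
    ∀ c ∈ l, cs.simple a * cs.simple c = cs.simple c * cs.simple a := by
  intro n
  induction n using Nat.strong_induction_on with
  | _ n IH =>
  intro l hln hred a heq c' hc'
  cases l with
  | nil => simp at hc'
  | cons c t =>
    have hlt : t.length + 1 = n := by simpa using hln
    have hπ : cs.wordProd (c :: t) = cs.simple c * cs.wordProd t := cs.wordProd_cons c t
    have hlred : cs.length (cs.wordProd (c :: t)) = n := by rw [hred]; exact hln
    have hredt : cs.IsReduced t := by
      show cs.length (cs.wordProd t) = t.length
      have h1 : cs.length (cs.wordProd t) ≤ t.length := cs.length_wordProd_le t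
      have h2 : cs.length (cs.wordProd (c :: t)) ≤ 1 + cs.length (cs.wordProd t) := by
        rw [hπ]
        calc cs.length (cs.simple c * cs.wordProd t)
            ≤ cs.length (cs.simple c) + cs.length (cs.wordProd t) := cs.length_mul_le _ _
          _ = 1 + cs.length (cs.wordProd t) := by rw [cs.length_simple]
      omega
    by_cases hac : a = c
    · have heqt : cs.simple a * cs.wordProd t = cs.wordProd t * cs.simple a := by
        have h1 := heq
        rw [hπ, hac] at h1
        rw [cs.simple_mul_simple_cancel_left] at h1
        have h2 : cs.wordProd t * cs.simple c = cs.simple c * cs.wordProd t := by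
          conv_lhs => rw [h1]
          rw [cs.simple_mul_simple_cancel_right]
        rw [hac]
        exact h2.symm
      rcases List.mem_cons.mp hc' with rfl | hmem
      · rw [hac]
      · exact IH t.length (by omega) t rfl hredt a heqt c' hmem
    · have hcomm : cs.simple a * cs.simple c = cs.simple c * cs.simple a := by
        by_cases hlen2 : cs.length (cs.simple a * cs.wordProd (c :: t))
            < cs.length (cs.wordProd (c :: t))
        · obtain ⟨j, hj, hje⟩ := exchange cs hlen2
          cases j with
          | zero =>
            exfalso
            have h1 : cs.simple a * (cs.simple c * cs.wordProd t) = cs.wordProd t := by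
              rw [← hπ]; exact hje
            rw [← mul_assoc] at h1
            have h2 : cs.simple a * cs.simple c = 1 := by
              have h3 : cs.simple a * cs.simple c * cs.wordProd t = 1 * cs.wordProd t := by
                rw [one_mul]; exact h1
              exact mul_right_cancel h3
            have h4 : cs.simple a = cs.simple c := by
              have h5 := mul_eq_one_iff_eq_inv.mp h2
              rwa [cs.inv_simple] at h5
            exact simple_ne cs hra hac h4
          | succ j' =>
            have hje' : cs.simple a * cs.wordProd (c :: t)
                = cs.wordProd (c :: t.eraseIdx j') := hje
            have hyeq : cs.simple a * cs.wordProd (c :: t.eraseIdx j')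
                = cs.wordProd (c :: t.eraseIdx j') * cs.simple a := by
              rw [← hje', cs.simple_mul_simple_cancel_left, heq,
                cs.simple_mul_simple_cancel_right]
            have hlt2 : cs.length (cs.simple a * cs.wordProd (c :: t)) + 1 = n := by
              rcases cs.length_simple_mul (cs.wordProd (c :: t)) a with h | h
              · omega
              · omega
            have hj'lt : j' < t.length := by
              simp only [List.length_cons] at hj
              omega
            have hle := List.length_eraseIdx_add_one hj'lt
            have hredy : cs.IsReduced (c :: t.eraseIdx j') := by
              show cs.length (cs.wordProd (c :: t.eraseIdx j')) = (c :: t.eraseIdx j').length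
              rw [← hje']
              simp only [List.length_cons]
              omega
            have hlen_y : (c :: t.eraseIdx j').length = t.length := by
              simp only [List.length_cons]
              omega
            exact IH t.length (by omega) (c :: t.eraseIdx j') hlen_y hredy a hyeq c
              List.mem_cons_self
        · have hup : cs.length (cs.simple a * cs.wordProd (c :: t)) = n + 1 := by
            rcases cs.length_simple_mul (cs.wordProd (c :: t)) a with h | h
            · omega
            · omega
          have ha_desc : cs.IsLeftDescent (cs.simple a * cs.wordProd (c :: t)) a := by
            show cs.length (cs.simple a * (cs.simple a * cs.wordProd (c :: t))) < _
            rw [cs.simple_mul_simple_cancel_left, hup, hlred]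
            omega
          have hc_desc : cs.IsLeftDescent (cs.simple a * cs.wordProd (c :: t)) c := by
            have e : cs.simple c * (cs.simple a * cs.wordProd (c :: t))
                = cs.wordProd t * cs.simple a := by
              rw [heq, hπ, ← mul_assoc, cs.simple_mul_simple_cancel_left]
            show cs.length (cs.simple c * (cs.simple a * cs.wordProd (c :: t)))
              < cs.length (cs.simple a * cs.wordProd (c :: t))
            rw [e, hup]
            have h1 : cs.length (cs.wordProd t * cs.simple a)
                ≤ cs.length (cs.wordProd t) + 1 := by
              have h2 := cs.length_mul_le (cs.wordProd t) (cs.simple a)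
              rwa [cs.length_simple] at h2
            have h3 : cs.length (cs.wordProd t) = t.length := hredt
            omega
          rcases hra a c hac with h2 | h0
          · have hp := cs.simple_mul_simple_pow a c
            rw [h2, pow_two] at hp
            calc cs.simple a * cs.simple c
                = (cs.simple a * cs.simple c)⁻¹ := (inv_eq_of_mul_eq_one_right hp).symm
              _ = (cs.simple c)⁻¹ * (cs.simple a)⁻¹ := mul_inv_rev _ _
              _ = cs.simple c * cs.simple a := by rw [cs.inv_simple, cs.inv_simple]
          · exact (no_two_noncomm_descents cs hra hac h0 ha_desc hc_desc).elim
      have heqt : cs.simple a * cs.wordProd t = cs.wordProd t * cs.simple a := by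
        have h2 : cs.simple c * (cs.simple a * cs.wordProd t)
            = cs.simple c * (cs.wordProd t * cs.simple a) := by
          calc cs.simple c * (cs.simple a * cs.wordProd t)
              = (cs.simple c * cs.simple a) * cs.wordProd t := (mul_assoc _ _ _).symm
            _ = (cs.simple a * cs.simple c) * cs.wordProd t := by rw [hcomm]
            _ = cs.simple a * (cs.simple c * cs.wordProd t) := mul_assoc _ _ _
            _ = (cs.simple c * cs.wordProd t) * cs.simple a := by rw [← hπ]; exact heq
            _ = cs.simple c * (cs.wordProd t * cs.simple a) := mul_assoc _ _ _
        exact mul_left_cancel h2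
      rcases List.mem_cons.mp hc' with rfl | hmem
      · exact hcomm
      · exact IH t.length (by omega) t rfl hredt a heqt c' hmem

end RAC

/-- In a right-angled Coxeter system, if deleting the two letters `a` and `b`
from the expression `l₁ a l₂ b l₃` does not change the product, and the middle
subword `l₂` is reduced, then `a = b` and `a` commutes with every letter of the
subword `l₂` between them. -/
theorem rightAngled_cancellation
    {B : Type*} {W : Type*} [Group W] {M : CoxeterMatrix B}
    (cs : CoxeterSystem M W)
    (hra : ∀ i j : B, i ≠ j → M.M i j = 2 ∨ M.M i j = 0)
    (l₁ l₂ l₃ : List B) (a b : B)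
    (hred : cs.IsReduced l₂)
    (hdel : cs.wordProd (l₁ ++ a :: (l₂ ++ b :: l₃)) =
      cs.wordProd (l₁ ++ l₂ ++ l₃)) :
    a = b ∧ ∀ c ∈ l₂,
      cs.simple a * cs.simple c = cs.simple c * cs.simple a := by
  classical
  have hdel' : cs.simple a * cs.wordProd l₂ * cs.simple b = cs.wordProd l₂ := by
    have h1 := hdel
    rw [cs.wordProd_append, cs.wordProd_cons, cs.wordProd_append, cs.wordProd_cons,
      cs.wordProd_append, cs.wordProd_append, mul_assoc] at h1
    have h2 : cs.simple a * (cs.wordProd l₂ * (cs.simple b * cs.wordProd l₃))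
        = cs.wordProd l₂ * cs.wordProd l₃ := mul_left_cancel h1
    have h3 : (cs.simple a * cs.wordProd l₂ * cs.simple b) * cs.wordProd l₃
        = cs.wordProd l₂ * cs.wordProd l₃ := by
      rw [← h2]; group
    exact mul_right_cancel h3
  have hab : a = b := by
    by_contra hne
    have h1 := congrArg (RAC.chiHom cs hra a) hdel'
    rw [map_mul, map_mul, RAC.chiHom_simple cs hra a a, RAC.chiHom_simple cs hra a b] at h1
    have e1 : (if a = a then (1 : ZMod 2) else 0) = 1 := if_pos rfl
    have e2 : (if b = a then (1 : ZMod 2) else 0) = 0 := if_neg (fun hh => hne hh.symm)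
    rw [e1, e2, ofAdd_zero, mul_one] at h1
    have h4 : Multiplicative.ofAdd (1 : ZMod 2) * RAC.chiHom cs hra a (cs.wordProd l₂)
        = 1 * RAC.chiHom cs hra a (cs.wordProd l₂) := by rw [one_mul]; exact h1
    have h5 := mul_right_cancel h4
    exact absurd h5 (by decide)
  rw [← hab] at hdel'
  have heq : cs.simple a * cs.wordProd l₂ = cs.wordProd l₂ * cs.simple a := by
    have h6 : (cs.simple a * cs.wordProd l₂ * cs.simple a) * cs.simple a
        = cs.wordProd l₂ * cs.simple a := by rw [hdel']
    rwa [cs.simple_mul_simple_cancel_right] at h6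
  exact ⟨hab, fun c hc => RAC.commute_of_comm cs hra l₂.length l₂ rfl hred a heq c hc⟩
end

section
/- Let (W,S) be a finite rank Coxeter system such that W is infinite. Suppose that for some s ∈ S the centralizer C_W(s) = {w ∈ W : sw = ws} is infinite. Then there exists a sequence (wᵢ) in C_W(s) with ℓ(wᵢ) → ∞ such that s ≰ wᵢ in the weak right order for all i. -/
/-!
Only finitely many elements have length at most `n` (there are finitely many words of length
at most `n` over the finite alphabet `S`), so the infinite centralizer contains elements of
arbitrarily large length. If such an element `w` has `s` as a left descent, replace it by `s w`:
it still commutes with `s`, no longer has `s` as a left descent, and is only one shorter.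
-/

namespace CoxeterSystem

variable {B W : Type*} [Group W] {M : CoxeterMatrix B} (cs : CoxeterSystem M W)

theorem finite_setOf_length_le [Finite B] (n : ℕ) : {w : W | cs.length w ≤ n}.Finite := by
  refine ((List.finite_length_le B n).image cs.wordProd).subset fun w hw => ?_
  obtain ⟨ω, hω, rfl⟩ := cs.exists_isReduced w
  exact ⟨ω, by simpa [hω.eq] using hw, rfl⟩

theorem exists_mem_lt_length_of_infinite [Finite B] {S : Set W} (hS : S.Infinite) (n : ℕ) :
    ∃ w ∈ S, n < cs.length w := by
  by_contra! h
  exact hS ((cs.finite_setOf_length_le n).subset h)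

theorem exists_mem_not_isLeftDescent {H : Subgroup W} {i : B} (hi : cs.simple i ∈ H) {w : W}
    (hw : w ∈ H) : ∃ w' ∈ H, ¬cs.IsLeftDescent w' i ∧ cs.length w ≤ cs.length w' + 1 := by
  by_cases h : cs.IsLeftDescent w i
  · exact ⟨cs.simple i * w, H.mul_mem hi hw, cs.isLeftDescent_iff_not_isLeftDescent_mul.mp h,
      (cs.isLeftDescent_iff.mp h).ge⟩
  · exact ⟨w, hw, h, Nat.le_succ _⟩

theorem exists_seq_not_isLeftDescent_tendsto_length [Finite B] {H : Subgroup W}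
    (hH : (H : Set W).Infinite) {i : B} (hi : cs.simple i ∈ H) :
    ∃ f : ℕ → W, (∀ n, f n ∈ H) ∧ (∀ n, ¬cs.IsLeftDescent (f n) i) ∧
      Filter.Tendsto (cs.length ∘ f) Filter.atTop Filter.atTop := by
  have long (n : ℕ) : ∃ w ∈ H, ¬cs.IsLeftDescent w i ∧ n ≤ cs.length w := by
    obtain ⟨w, hw, hlen⟩ := cs.exists_mem_lt_length_of_infinite hH n
    obtain ⟨w', hw', hdesc, hlen'⟩ := cs.exists_mem_not_isLeftDescent hi hw
    exact ⟨w', hw', hdesc, by omega⟩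
  choose f hf hdesc hlen using long
  exact ⟨f, hf, hdesc, Filter.tendsto_atTop_mono hlen Filter.tendsto_id⟩

end CoxeterSystem

theorem exists_centralizer_seq_not_ge_simple_general
    {B : Type*} [Finite B] {W : Type*} [Group W]
    {M : CoxeterMatrix B} (cs : CoxeterSystem M W) (s : B)
    (hcent : {w : W | cs.simple s * w = w * cs.simple s}.Infinite) :
    ∃ f : ℕ → W,
      (∀ n, cs.simple s * f n = f n * cs.simple s) ∧
      (∀ n, ¬ cs.length (f n) = 1 + cs.length (cs.simple s * f n)) ∧
      Filter.Tendsto (fun n => cs.length (f n)) Filter.atTop Filter.atTop := by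
  have hcentralizer : {w : W | cs.simple s * w = w * cs.simple s} = Subgroup.centralizer {cs.simple s} := by
    ext w
    exact (Subgroup.mem_centralizer_singleton_iff.trans eq_comm).symm
  obtain ⟨f, hf, hdesc, hlen⟩ := cs.exists_seq_not_isLeftDescent_tendsto_length (hcentralizer ▸ hcent)
    (Subgroup.mem_centralizer_singleton_iff.mpr rfl)
  refine ⟨f, fun n => (Set.ext_iff.mp hcentralizer (f n)).mpr (hf n), fun n => ?_, hlen⟩
  rw [add_comm, eq_comm, ← cs.isLeftDescent_iff]
  exact hdesc n

/-- Let `(W,S)` be a finite rank Coxeter system with `W` infinite and suppose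
the centralizer of some generator `s` is infinite. Then there is a sequence
`(wᵢ)` of elements of the centralizer of `s` whose lengths tend to infinity
and such that `s ≰ wᵢ` in the weak right order
(`s ≤ w ↔ ℓ(w) = 1 + ℓ(s w)`) for all `i`. -/
theorem exists_centralizer_seq_not_ge_simple
    {B : Type*} [Finite B] {W : Type*} [Group W] [Infinite W]
    {M : CoxeterMatrix B} (cs : CoxeterSystem M W) (s : B)
    (hcent : {w : W | cs.simple s * w = w * cs.simple s}.Infinite) :
    ∃ f : ℕ → W,
      (∀ n, cs.simple s * f n = f n * cs.simple s) ∧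
      (∀ n, ¬ cs.length (f n) = 1 + cs.length (cs.simple s * f n)) ∧
      Filter.Tendsto (fun n => cs.length (f n)) Filter.atTop Filter.atTop :=
  exists_centralizer_seq_not_ge_simple_general cs s hcent
end
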